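/- As p → 2⁺, the quantity 2^{2p/(p−2)} √(p−2) · c_p converges to √(2π), where c_p = ∫_0^1 (1 + s^{(p−2)/p})^{−2p/(p−2)} ds. -/

import Mathlib

/-!
Put `m = p / (p - 2)`. The substitution `s = (u / (1 - u)) ^ m` turns `c_p` into
`m ∫₀^{1/2} (u (1 - u)) ^ (m - 1) du = m B(m, m) / 2`, and Legendre's duplication formula gives
`2 ^ (2m) c_p = √π · m Γ(m) / Γ(m + 1/2)`. Log-convexity of `Γ` squeezes
`√x Γ(x) / Γ(x + 1/2)` between `1` and `√(1 + 1/(2x))`, so it tends to `1`. Since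
`√(p - 2) · m = √p · √m` and `m → ∞` as `p → 2⁺`, the limit is `√π · √2`.
-/

open Real Filter Set intervalIntegral MeasureTheory Topology

theorem integral_rpow_mul_one_sub_rpow_eq_Gamma {u v : ℝ} (hu : 0 < u) (hv : 0 < v) :
    ∫ x in (0 : ℝ)..1, x ^ (u - 1) * (1 - x) ^ (v - 1) = Gamma u * Gamma v / Gamma (u + v) := by
  have hbeta : Complex.betaIntegral u v
      = ((∫ x in (0 : ℝ)..1, x ^ (u - 1) * (1 - x) ^ (v - 1) : ℝ) : ℂ) := by
    rw [Complex.betaIntegral, ← intervalIntegral.integral_ofReal]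
    refine integral_congr fun x hx => ?_
    rw [uIcc_of_le zero_le_one] at hx
    push_cast
    rw [Complex.ofReal_cpow hx.1, Complex.ofReal_cpow (sub_nonneg.2 hx.2)]
    push_cast
    ring_nf
  have h := Complex.Gamma_mul_Gamma_eq_betaIntegral (s := u) (t := v)
    (by simpa using hu) (by simpa using hv)
  rw [hbeta, ← Complex.ofReal_add, Complex.Gamma_ofReal, Complex.Gamma_ofReal,
    Complex.Gamma_ofReal, ← Complex.ofReal_mul, ← Complex.ofReal_mul] at h
  rw [eq_div_iff (Gamma_pos_of_pos (add_pos hu hv)).ne', mul_comm]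
  exact_mod_cast h.symm

theorem integral_zero_one_eq_two_mul_integral_zero_half {f : ℝ → ℝ}
    (hf : IntervalIntegrable f volume 0 (1 / 2)) (hsymm : ∀ x, f (1 - x) = f x) :
    ∫ x in (0 : ℝ)..1, f x = 2 * ∫ x in (0 : ℝ)..(1 / 2), f x := by
  have hflip : ∫ x in (1 / 2 : ℝ)..1, f x = ∫ x in (0 : ℝ)..(1 / 2), f x := by
    rw [← integral_congr fun x _ => hsymm x, integral_comp_sub_left]
    norm_num
  have hf' : IntervalIntegrable f volume (1 / 2) 1 := by
    have := (hf.comp_sub_left 1).symm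
    norm_num [hsymm] at this
    exact this
  rw [← integral_add_adjacent_intervals hf hf', hflip, two_mul]

theorem hasDerivAt_div_one_sub_rpow {m u : ℝ} (hu0 : 0 < u) (hu1 : u < 1) :
    HasDerivAt (fun u => (u / (1 - u)) ^ m)
      (m * (u / (1 - u)) ^ (m - 1) * ((1 - u) ^ 2)⁻¹) u := by
  have h1u : 1 - u ≠ 0 := by linarith
  have hdiv : HasDerivAt (fun u : ℝ => u / (1 - u)) ((1 - u) ^ 2)⁻¹ u := by
    refine ((hasDerivAt_id' u).div ((hasDerivAt_id' u).const_sub 1) h1u).congr_deriv ?_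
    ring
  convert hdiv.rpow_const (Or.inl (div_pos hu0 (by linarith)).ne') using 1
  ring

theorem integrand_comp_div_one_sub_rpow_mul_deriv {m u : ℝ} (hm : 0 < m) (hu0 : 0 ≤ u)
    (hu1 : u < 1) :
    (1 + ((u / (1 - u)) ^ m) ^ (1 / m)) ^ (-(2 * m)) *
        (m * (u / (1 - u)) ^ (m - 1) * ((1 - u) ^ 2)⁻¹)
      = m * (u ^ (m - 1) * (1 - u) ^ (m - 1)) := by
  have h1u : 0 < 1 - u := by linarith
  have hroot : ((u / (1 - u)) ^ m) ^ (1 / m) = u / (1 - u) := by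
    rw [← rpow_mul (div_nonneg hu0 h1u.le), mul_one_div_cancel hm.ne', rpow_one]
  have hone_add : 1 + u / (1 - u) = (1 - u)⁻¹ := by field_simp; ring
  have hpow : (1 - u) ^ (2 * m) = (1 - u) ^ (m - 1) * (1 - u) ^ (m - 1) * (1 - u) ^ 2 := by
    rw [← rpow_natCast, ← rpow_add h1u, ← rpow_add h1u]
    congr 1
    push_cast
    ring
  rw [hroot, hone_add, inv_rpow h1u.le, rpow_neg h1u.le, inv_inv, div_rpow hu0 h1u.le, hpow]
  have : (1 - u) ^ (m - 1) ≠ 0 := (rpow_pos_of_pos h1u _).ne'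
  field_simp

theorem integral_one_add_rpow_one_div_rpow_neg {m : ℝ} (hm : 0 < m) :
    ∫ s in (0 : ℝ)..1, (1 + s ^ (1 / m)) ^ (-(2 * m))
      = m * ∫ u in (0 : ℝ)..(1 / 2), u ^ (m - 1) * (1 - u) ^ (m - 1) := by
  set f : ℝ → ℝ := fun u => (u / (1 - u)) ^ m
  set f' : ℝ → ℝ := fun u => m * (u / (1 - u)) ^ (m - 1) * ((1 - u) ^ 2)⁻¹
  have hIcc : uIcc (0 : ℝ) (1 / 2) = Icc 0 (1 / 2) := uIcc_of_le (by norm_num)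
  have hIoo : Ioo (min (0 : ℝ) (1 / 2)) (max 0 (1 / 2)) = Ioo 0 (1 / 2) := by norm_num
  have hf : ContinuousOn f (uIcc 0 (1 / 2)) := by
    rw [hIcc]
    refine ContinuousOn.rpow_const (continuousOn_id.div (by fun_prop) fun u hu => ?_)
      fun _ _ => Or.inr hm.le
    linarith [hu.2]
  have hff' : ∀ u ∈ Ioo (min (0 : ℝ) (1 / 2)) (max 0 (1 / 2)), HasDerivAt f (f' u) u := by
    rw [hIoo]
    exact fun u hu => hasDerivAt_div_one_sub_rpow hu.1 (by linarith [hu.2])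
  have hf'_nonneg : ∀ u ∈ Ioo (min (0 : ℝ) (1 / 2)) (max 0 (1 / 2)), 0 ≤ f' u := by
    rw [hIoo]
    intro u ⟨hu0, hu1⟩
    have : 0 < 1 - u := by linarith
    positivity
  have hsubst := integral_comp_mul_deriv_of_deriv_nonneg hf hff' hf'_nonneg
    (g := fun s => (1 + s ^ (1 / m)) ^ (-(2 * m)))
  have hf0 : f 0 = 0 := by simp [f, zero_rpow hm.ne']
  have hf1 : f (1 / 2) = 1 := by norm_num [f]
  rw [hf0, hf1] at hsubst
  rw [← hsubst, ← intervalIntegral.integral_const_mul]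
  refine integral_congr fun u hu => ?_
  rw [hIcc] at hu
  exact integrand_comp_div_one_sub_rpow_mul_deriv hm hu.1 (by linarith [hu.2])

theorem two_rpow_mul_integral_one_add_rpow_one_div_rpow_neg {m : ℝ} (hm : 0 < m) :
    2 ^ (2 * m) * ∫ s in (0 : ℝ)..1, (1 + s ^ (1 / m)) ^ (-(2 * m))
      = √π * (m * Gamma m / Gamma (m + 1 / 2)) := by
  have hhalf : ∫ u in (0 : ℝ)..(1 / 2), u ^ (m - 1) * (1 - u) ^ (m - 1)
      = Gamma m * Gamma m / Gamma (2 * m) / 2 := by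
    have hint :
        IntervalIntegrable (fun u : ℝ => u ^ (m - 1) * (1 - u) ^ (m - 1)) volume 0 (1 / 2) := by
      refine (intervalIntegrable_rpow' (by linarith)).mul_continuousOn
        (ContinuousOn.rpow_const (by fun_prop) fun u hu => Or.inl ?_)
      rw [uIcc_of_le (by norm_num)] at hu
      linarith [hu.2]
    rw [eq_div_iff two_ne_zero, mul_comm, ← integral_zero_one_eq_two_mul_integral_zero_half hint
      (fun u => by rw [sub_sub_cancel, mul_comm]), integral_rpow_mul_one_sub_rpow_eq_Gamma hm hm,
      two_mul]
  have hGm := Gamma_pos_of_pos hm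
  have hGm' := Gamma_pos_of_pos (by linarith : 0 < m + 1 / 2)
  have hdup : Gamma (2 * m) = Gamma m * Gamma (m + 1 / 2) / (2 ^ (1 - 2 * m) * √π) := by
    rw [Gamma_mul_Gamma_add_half, mul_assoc, mul_div_cancel_right₀ _ (by positivity)]
  rw [integral_one_add_rpow_one_div_rpow_neg hm, hhalf, hdup]
  field_simp
  rw [← rpow_add two_pos]
  norm_num

theorem Gamma_add_half_le_sqrt_mul_Gamma {x : ℝ} (hx : 0 < x) :
    Gamma (x + 1 / 2) ≤ √x * Gamma x := by
  have h := Gamma_mul_add_mul_le_rpow_Gamma_mul_rpow_Gamma hx (by linarith : 0 < x + 1)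
    one_half_pos one_half_pos (by norm_num)
  rw [Gamma_add_one hx.ne', mul_rpow hx.le (Gamma_pos_of_pos hx).le, mul_left_comm,
    ← rpow_add (Gamma_pos_of_pos hx), ← sqrt_eq_rpow] at h
  convert h using 2 <;> norm_num
  ring

theorem mul_Gamma_le_sqrt_mul_Gamma_add_half {x : ℝ} (hx : 0 < x) :
    x * Gamma x ≤ √(x + 1 / 2) * Gamma (x + 1 / 2) := by
  have h := Gamma_add_half_le_sqrt_mul_Gamma (by linarith : 0 < x + 1 / 2)
  rwa [add_assoc, add_halves, Gamma_add_one hx.ne'] at h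

theorem tendsto_sqrt_mul_Gamma_div_Gamma_add_half :
    Tendsto (fun x => √x * Gamma x / Gamma (x + 1 / 2)) atTop (𝓝 1) := by
  have hupper : Tendsto (fun x : ℝ => √(1 + (2 * x)⁻¹)) atTop (𝓝 1) := by
    have : Tendsto (fun x : ℝ => (2 * x)⁻¹) atTop (𝓝 0) :=
      tendsto_inv_atTop_zero.comp (tendsto_id.const_mul_atTop two_pos)
    simpa using ((this.const_add 1).sqrt)
  refine tendsto_of_tendsto_of_tendsto_of_le_of_le' tendsto_const_nhds hupper ?_ ?_
  · filter_upwards [eventually_gt_atTop 0] with x hx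
    rw [one_le_div (Gamma_pos_of_pos (by linarith))]
    exact Gamma_add_half_le_sqrt_mul_Gamma hx
  · filter_upwards [eventually_gt_atTop 0] with x hx
    rw [div_le_iff₀ (Gamma_pos_of_pos (by linarith))]
    have h := mul_Gamma_le_sqrt_mul_Gamma_add_half hx
    have hsq : √x * √(1 + (2 * x)⁻¹) = √(x + 1 / 2) := by
      rw [← sqrt_mul hx.le]; congr 1; field_simp
    calc √x * Gamma x = x * Gamma x / √x := by
          rw [mul_div_right_comm, div_sqrt]
      _ ≤ √(x + 1 / 2) * Gamma (x + 1 / 2) / √x := by gcongr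
      _ = √(1 + (2 * x)⁻¹) * Gamma (x + 1 / 2) := by
          rw [← hsq]; field_simp

theorem two_rpow_mul_sqrt_mul_integral_eq {p : ℝ} (hp : 2 < p) :
    (2 : ℝ) ^ (2 * p / (p - 2)) * √(p - 2) *
        ∫ s in (0 : ℝ)..1, (1 + s ^ ((p - 2) / p)) ^ (-(2 * p) / (p - 2))
      = √π * √p * (√(p / (p - 2)) * Gamma (p / (p - 2)) / Gamma (p / (p - 2) + 1 / 2)) := by
  have hp2 : 0 < p - 2 := by linarith
  set m := p / (p - 2) with hm_def
  have hm : 0 < m := by positivity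
  have h1 : (p - 2) / p = 1 / m := by rw [one_div_div]
  have h2 : -(2 * p) / (p - 2) = -(2 * m) := by rw [neg_div, mul_div_assoc]
  have h3 : 2 * p / (p - 2) = 2 * m := mul_div_assoc _ _ _
  have hsqrt_p : √(p - 2) * √m = √p := by
    rw [← sqrt_mul hp2.le, hm_def, mul_div_cancel₀ _ hp2.ne']
  have hsqrt : √(p - 2) * m = √p * √m := by rw [← hsqrt_p, mul_assoc, mul_self_sqrt hm.le]
  rw [h1, h2, h3]
  calc 2 ^ (2 * m) * √(p - 2) * ∫ s in (0 : ℝ)..1, (1 + s ^ (1 / m)) ^ (-(2 * m))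
      = √(p - 2) * (2 ^ (2 * m) * ∫ s in (0 : ℝ)..1, (1 + s ^ (1 / m)) ^ (-(2 * m))) := by
        ring
    _ = √π * (√(p - 2) * m) * Gamma m / Gamma (m + 1 / 2) := by
      rw [two_rpow_mul_integral_one_add_rpow_one_div_rpow_neg hm]; ring
    _ = √π * √p * (√m * Gamma m / Gamma (m + 1 / 2)) := by rw [hsqrt]; ring

theorem tendsto_div_sub_two_nhdsGT_two :
    Tendsto (fun p : ℝ => p / (p - 2)) (𝓝[>] 2) atTop := by
  have hsub : Tendsto (fun p : ℝ => p - 2) (𝓝[>] 2) (𝓝[>] 0) := by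
    refine tendsto_nhdsWithin_iff.2 ⟨?_, ?_⟩
    · exact ((continuous_sub_right 2).tendsto' 2 0 (sub_self 2)).mono_left nhdsWithin_le_nhds
    · filter_upwards [self_mem_nhdsWithin] with p hp
      simpa using hp
  exact (tendsto_nhdsWithin_of_tendsto_nhds tendsto_id).pos_mul_atTop two_pos
    (tendsto_inv_nhdsGT_zero.comp hsub)

/-- As `p → 2⁺`, `2^{2p/(p-2)} √(p-2) · c_p → √(2π)`, where
`c_p = ∫_0^1 (1+s^{(p-2)/p})^{-2p/(p-2)} ds`. -/
theorem stmt_8 :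
    Tendsto
      (fun p : ℝ => (2 : ℝ) ^ (2 * p / (p - 2)) * Real.sqrt (p - 2) *
        ∫ s in (0 : ℝ)..1, (1 + s ^ ((p - 2) / p)) ^ (-(2 * p) / (p - 2)))
      (nhdsWithin 2 (Set.Ioi 2)) (nhds (Real.sqrt (2 * π))) := by
  have hratio := tendsto_sqrt_mul_Gamma_div_Gamma_add_half.comp tendsto_div_sub_two_nhdsGT_two
  have hsqrt : Tendsto (fun p : ℝ => √π * √p) (𝓝[>] 2) (𝓝 (√π * √2)) :=
    ((continuous_const.mul continuous_sqrt).tendsto 2).mono_left nhdsWithin_le_nhds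
  rw [show √(2 * π) = √π * √2 * 1 by rw [mul_one, sqrt_mul zero_le_two, mul_comm]]
  refine (hsqrt.mul hratio).congr' ?_
  filter_upwards [self_mem_nhdsWithin] with p hp
  exact (two_rpow_mul_sqrt_mul_integral_eq hp).symm
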